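/- arXiv:1605.00187 — 2 statements merged into one kernel-verified Lean document; each statement's English description precedes it below -/
import Mathlib

section
/- Given s ∈ (1,2), C > 1, κ ∈ (0, (s−1)/(2s)) and β ∈ (0, π/2), the following holds for all sufficiently large N (depending only on s, C, κ, β): if A is a discrete (s,C)-Ahlfors regular set at scale 2^{-N} contained in [0,1]² and B ⊂ A satisfies #B > 2^{(1−κ)sN}, then there exists a subset E ⊂ B with #E ≤ 2^{(1−κ)sN} such that for all x ∈ B ∖ E and every v ∈ S¹ there exists y ∈ B with y ∈ X(x,β,v) and |x − y| ≥ 2^{−2s(s−1)^{−1}κN}. -/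
open MeasureTheory Metric Set Filter
open scoped ENNReal NNReal Topology

noncomputable section

/-- The plane `ℝ²` with the Euclidean norm. -/
abbrev Plane := EuclideanSpace ℝ (Fin 2)

/-- The closed unit square `[0,1]²`. -/
def unitSquare : Set Plane := {x | ∀ i, 0 ≤ x i ∧ x i ≤ 1}

/-- The half-open unit cube `[0,1)^d`. -/
def unitCubeHO (d : ℕ) : Set (EuclideanSpace ℝ (Fin d)) := {x | ∀ i, 0 ≤ x i ∧ x i < 1}

/-- The pinned distance set `dist(x,A) = {|x-y| : y ∈ A}`. -/
def pinnedDist (x : Plane) (A : Set Plane) : Set ℝ := (fun y => dist x y) '' A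

/-- The distance set `dist(A,B) = {|x-y| : x ∈ A, y ∈ B}`. -/
def distSet (A B : Set Plane) : Set ℝ := {r | ∃ x ∈ A, ∃ y ∈ B, r = dist x y}

/-- Number of cells of the grid `εℤ` that intersect `F ⊆ ℝ`. -/
def gridCount (F : Set ℝ) (ε : ℝ) : ℕ :=
  Nat.card {n : ℤ // (Set.Ico ((n : ℝ) * ε) (((n : ℝ) + 1) * ε) ∩ F).Nonempty}

/-- Number of cells of the grid `εℤ²` that intersect `F ⊆ ℝ²`. -/
def gridCount2 (F : Set Plane) (ε : ℝ) : ℕ :=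
  Nat.card {n : Fin 2 → ℤ //
    ({x : Plane | ∀ i, (n i : ℝ) * ε ≤ x i ∧ x i < ((n i : ℝ) + 1) * ε} ∩ F).Nonempty}

/-- Lower box-counting dimension of `F ⊆ ℝ`. -/
def lbdim (F : Set ℝ) : ℝ :=
  Filter.liminf (fun ε : ℝ => Real.log (gridCount F ε) / (-Real.log ε)) (nhdsWithin 0 (Set.Ioi 0))

/-- Upper box-counting dimension of `F ⊆ ℝ`. -/
def ubdim (F : Set ℝ) : ℝ :=
  Filter.limsup (fun ε : ℝ => Real.log (gridCount F ε) / (-Real.log ε)) (nhdsWithin 0 (Set.Ioi 0))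

/-- Lower box-counting dimension of `F ⊆ ℝ²`. -/
def lbdim2 (F : Set Plane) : ℝ :=
  Filter.liminf (fun ε : ℝ => Real.log (gridCount2 F ε) / (-Real.log ε)) (nhdsWithin 0 (Set.Ioi 0))

/-- Upper box-counting dimension of `F ⊆ ℝ²`. -/
def ubdim2 (F : Set Plane) : ℝ :=
  Filter.limsup (fun ε : ℝ => Real.log (gridCount2 F ε) / (-Real.log ε)) (nhdsWithin 0 (Set.Ioi 0))

/-- Modified lower box-counting dimension of `F ⊆ ℝ`. -/
def mlbdim (F : Set ℝ) : ℝ :=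
  sInf {a : ℝ | ∃ G : ℕ → Set ℝ, (∀ i, Bornology.IsBounded (G i)) ∧ (F ⊆ ⋃ i, G i) ∧
    ∀ i, lbdim (G i) ≤ a}

/-- A set `E ⊆ ℝ^d` is discrete `(s,C)`-Ahlfors regular at scale `2^{-N}`. -/
def DiscreteAhlfors (d : ℕ) (E : Set (EuclideanSpace ℝ (Fin d))) (s C : ℝ) (N : ℕ) : Prop :=
  E.Finite ∧ ∀ x ∈ E, ∀ k : ℕ, k < N →
    C⁻¹ * (2 : ℝ) ^ (((N : ℝ) - (k : ℝ)) * s)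
        ≤ (Nat.card ↥(E ∩ closedBall x ((2 : ℝ) ^ (-(k : ℤ)))) : ℝ) ∧
    (Nat.card ↥(E ∩ closedBall x ((2 : ℝ) ^ (-(k : ℤ)))) : ℝ)
        ≤ C * (2 : ℝ) ^ (((N : ℝ) - (k : ℝ)) * s)

/-- Topological support of a measure. -/
def msupport {X : Type*} [TopologicalSpace X] [MeasurableSpace X]
    (μ : MeasureTheory.Measure X) : Set X :=
  {x | ∀ U : Set X, IsOpen U → x ∈ U → 0 < μ U}

/-- A measure is `(s,C)`-Ahlfors regular at scale `2^{-N}`. -/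
def ARMeasureAtScale (d : ℕ) (ν : Measure (EuclideanSpace ℝ (Fin d))) (s C : ℝ) (N : ℕ) : Prop :=
  ∀ x ∈ msupport ν, ∀ r : ℝ, (2 : ℝ) ^ (-(N : ℤ)) ≤ r → r ≤ 1 →
    ENNReal.ofReal (C⁻¹ * r ^ s) ≤ ν (closedBall x r) ∧
      ν (closedBall x r) ≤ ENNReal.ofReal (C * r ^ s)

/-- A measure is `(s,C)`-Ahlfors regular. -/
def ARMeasure (d : ℕ) (ν : Measure (EuclideanSpace ℝ (Fin d))) (s C : ℝ) : Prop :=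
  ∀ x ∈ msupport ν, ∀ r : ℝ, 0 < r → r ≤ 1 →
    ENNReal.ofReal (C⁻¹ * r ^ s) ≤ ν (closedBall x r) ∧
      ν (closedBall x r) ≤ ENNReal.ofReal (C * r ^ s)

/-- A set `E` is `(s,C)`-Ahlfors regular: `ℋ^s|_E` is a positive finite `(s,C)`-Ahlfors
regular measure. -/
def ARSet (d : ℕ) (E : Set (EuclideanSpace ℝ (Fin d))) (s C : ℝ) : Prop :=
  0 < μH[s] E ∧ μH[s] E < ⊤ ∧ ARMeasure d (μH[s].restrict E) s C

/-- The half-open dyadic cube of generation `k` indexed by `m ∈ ℤ^d`. -/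
def dcube (d k : ℕ) (m : Fin d → ℤ) : Set (EuclideanSpace ℝ (Fin d)) :=
  {x | ∀ i, (m i : ℝ) * (2 : ℝ) ^ (-(k : ℤ)) ≤ x i ∧ x i < ((m i : ℝ) + 1) * (2 : ℝ) ^ (-(k : ℤ))}

/-- The homothety mapping the dyadic cube `dcube d k m` onto `[0,1)^d`. -/
def cubeMap (d k : ℕ) (m : Fin d → ℤ) (x : EuclideanSpace ℝ (Fin d)) :
    EuclideanSpace ℝ (Fin d) :=
  (EuclideanSpace.equiv (Fin d) ℝ).symm (fun i => (2 : ℝ) ^ k * x i - (m i : ℝ))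

/-- The (left) corner of the dyadic cube `dcube d N m`. -/
def cubeCorner (d N : ℕ) (m : Fin d → ℤ) : EuclideanSpace ℝ (Fin d) :=
  (EuclideanSpace.equiv (Fin d) ℝ).symm (fun i => (m i : ℝ) * (2 : ℝ) ^ (-(N : ℤ)))

/-- `μ^Q`: the normalized restriction of `μ` to a dyadic cube, renormalized to `[0,1)^d`. -/
def cubeMeasure (d k : ℕ) (m : Fin d → ℤ) (μ : Measure (EuclideanSpace ℝ (Fin d))) :
    Measure (EuclideanSpace ℝ (Fin d)) :=
  Measure.map (cubeMap d k m) ((μ (dcube d k m))⁻¹ • μ.restrict (dcube d k m))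

/-- Entropy (base 2) of `μ` with respect to the dyadic partition of generation `k`. -/
def entropy (d : ℕ) (μ : Measure (EuclideanSpace ℝ (Fin d))) (k : ℕ) : ℝ :=
  ∑' m : Fin d → ℤ, -((μ (dcube d k m)).toReal * Real.logb 2 (μ (dcube d k m)).toReal)

/-- Normalized entropy `H_k(μ) = H(μ, 𝒟_k)/k`. -/
def nentropy (d : ℕ) (μ : Measure (EuclideanSpace ℝ (Fin d))) (k : ℕ) : ℝ :=
  entropy d μ k / k

/-- The half-open dyadic interval of generation `k` indexed by `m ∈ ℤ`. -/
def dint (k : ℕ) (m : ℤ) : Set ℝ :=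
  Set.Ico ((m : ℝ) * (2 : ℝ) ^ (-(k : ℤ))) (((m : ℝ) + 1) * (2 : ℝ) ^ (-(k : ℤ)))

/-- Entropy (base 2) of a measure on `ℝ` with respect to dyadic intervals of generation `k`. -/
def entropyR (μ : Measure ℝ) (k : ℕ) : ℝ :=
  ∑' m : ℤ, -((μ (dint k m)).toReal * Real.logb 2 (μ (dint k m)).toReal)

/-- Normalized entropy of a measure on `ℝ`. -/
def nentropyR (μ : Measure ℝ) (k : ℕ) : ℝ :=
  entropyR μ k / k

open Classical in
/-- `μ` is `s`-rich at resolution `(N,q,δ)`. -/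
def sRich (d : ℕ) (μ : Measure (EuclideanSpace ℝ (Fin d))) (s : ℝ) (N q : ℕ) (δ : ℝ) : Prop :=
  (1 / N : ℝ) * ∑ n ∈ Finset.range N, ∑' m : Fin d → ℤ,
    (if 0 < μ (dcube d n m) ∧ nentropy d (cubeMeasure d n m μ) q < s - δ
      then (μ (dcube d n m)).toReal else 0) < δ

/-- `μ` is weakly `s`-regular. -/
def WeaklyRegular (d : ℕ) (μ : Measure (EuclideanSpace ℝ (Fin d))) (s : ℝ) : Prop :=
  ∀ δ : ℝ, 0 < δ → ∃ q : ℕ, ∃ N₀ : ℕ, ∀ N : ℕ, N₀ ≤ N → sRich d μ s N q δ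

/-- Average of the quantity `f(μ^Q)` with respect to the scenery distribution `⟨μ⟩_{[0,N)}`. -/
def sceneryAvg (d : ℕ) (μ : Measure (EuclideanSpace ℝ (Fin d))) (N : ℕ)
    (f : Measure (EuclideanSpace ℝ (Fin d)) → ℝ) : ℝ :=
  (1 / N : ℝ) * ∑ n ∈ Finset.range N, ∑' m : Fin d → ℤ,
    (μ (dcube d n m)).toReal * f (cubeMeasure d n m μ)

/-- The two-sided open cone with apex `a`, direction `v` and half-opening angle `β`. -/
def cone (a : Plane) (β : ℝ) (v : Plane) : Set Plane :=
  {x | x ≠ a ∧ (InnerProductGeometry.angle (x - a) v < β ∨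
      InnerProductGeometry.angle (x - a) (-v) < β)}

/-- `A` is `k`-discrete: every dyadic square of generation `k` contains at most one point. -/
def kDiscrete (A : Set Plane) (k : ℕ) : Prop :=
  ∀ m : Fin 2 → ℤ, (A ∩ dcube 2 k m).Subsingleton

/-- Hausdorff dimension of a measure: `inf {dimH E : μ E > 0}`. -/
def hdimMeasure (d : ℕ) (μ : Measure (EuclideanSpace ℝ (Fin d))) : ℝ≥0∞ :=
  ⨅ (E : Set (EuclideanSpace ℝ (Fin d))) (_ : 0 < μ E), dimH E

/-- Orthogonal projection onto direction `v`: `Π_v(x) = v ⬝ x`. -/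
def projDir (v x : Plane) : ℝ := inner ℝ v x

/-- The measure associated to a discrete set: `(1/#A) ∑_D #(A ∩ D) ℒ_D`. -/
def discreteToMeasure (d N : ℕ) (A : Set (EuclideanSpace ℝ (Fin d))) :
    Measure (EuclideanSpace ℝ (Fin d)) :=
  (Nat.card ↥A : ℝ≥0∞)⁻¹ • Measure.sum (fun m : Fin d → ℤ =>
    (Nat.card ↥(A ∩ dcube d N m) : ℝ≥0∞) •
      ((volume (dcube d N m))⁻¹ • volume.restrict (dcube d N m)))


/-- The Katz--Tao example set
`A_N = {(i 2^{-N/2}, j 2^{-N}) : 0 ≤ i < 2^{N/2} - 1, 0 ≤ j < 2^{N/2}}`. -/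
def exampleSet (N : ℕ) : Set Plane :=
  {p | ∃ i j : ℤ, 0 ≤ i ∧ i < 2 ^ (N / 2) - 1 ∧ 0 ≤ j ∧ j < 2 ^ (N / 2) ∧
    p 0 = (i : ℝ) * (2 : ℝ) ^ (-((N / 2 : ℕ) : ℤ)) ∧ p 1 = (j : ℝ) * (2 : ℝ) ^ (-(N : ℤ))}

end

/-!
Take `r = 2^{-τN}` with `τ = 2sκ/(s-1)` and let `E` be the points `x ∈ B` having a cone
`X(x, β, v)` in which all points of `B` are `r`-close to `x`. Fix finitely many unit vectors `u`
such that every `X(x, β, v)` contains some `X(x, β/2, u)`, and label `x ∈ E` by such a `u` and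
by the strip of width `r` parallel to `u` containing `x`. Two points of `E` with the same label
are at distance `≤ r / sin (β/2)`: either one lies in the narrow cone of the other, or their
difference makes an angle `≥ β/2` with `u` and its component orthogonal to `u` is `< r`.
Ahlfors regularity bounds each label class by `≲ (2^N r)^s`, and there are `≲ 1/r` labels, so
`#E ≲ 2^{Ns} r^{s-1} = 2^{(1-2κ)sN}`, which is `≤ 2^{(1-κ)sN}` for large `N`.
-/

open InnerProductGeometry
open scoped RealInnerProductSpace EuclideanSpace

section Angles

variable {V : Type*} [NormedAddCommGroup V] [InnerProductSpace ℝ V]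

theorem exists_finset_forall_angle_lt [ProperSpace V] {γ : ℝ} (hγ : 0 < γ) :
    ∃ U : Finset V, (∀ u ∈ U, ‖u‖ = 1) ∧ ∀ v : V, v ≠ 0 → ∃ u ∈ U, angle v u < γ := by
  obtain ⟨U, hUS, hcover⟩ := (isCompact_sphere (0 : V) 1).elim_nhds_subcover
    (fun u => {v | angle v u < γ}) fun u hu => by
      have hu0 : u ≠ 0 := by rintro rfl; simp at hu
      have hcont : ContinuousAt (fun v => angle v u) u :=
        (continuousAt_angle (x := (u, u)) hu0 hu0).comp (f := fun v => (v, u))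
          (continuousAt_id.prodMk continuousAt_const)
      exact hcont.preimage_mem_nhds (Iio_mem_nhds (by rwa [angle_self hu0]))
  refine ⟨U, fun u hu => by simpa using hUS u hu, fun v hv => ?_⟩
  have hv' : ‖v‖⁻¹ • v ∈ sphere (0 : V) 1 := by simp [norm_smul, hv]
  obtain ⟨u, hu, hvu⟩ := mem_iUnion₂.mp (hcover hv')
  exact ⟨u, hu, by rwa [mem_ofPred_eq, angle_smul_left_of_pos _ _ (by positivity)] at hvu⟩

theorem Orientation.norm_mul_sin_le_abs_areaForm [Fact (Module.finrank ℝ V = 2)]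
    (o : Orientation ℝ V (Fin 2)) {u z : V} (hu : ‖u‖ = 1) {γ : ℝ} (hγ : 0 ≤ γ)
    (h₁ : γ ≤ angle z u) (h₂ : γ ≤ angle z (-u)) : ‖z‖ * Real.sin γ ≤ |o.areaForm u z| := by
  have hcos₁ : Real.cos (angle z u) ≤ Real.cos γ :=
    Real.cos_le_cos_of_nonneg_of_le_pi hγ (angle_le_pi _ _) h₁
  have hcos₂ : -Real.cos (angle z u) ≤ Real.cos γ := by
    have := Real.cos_le_cos_of_nonneg_of_le_pi hγ (angle_le_pi _ _) h₂
    rwa [angle_neg_right, Real.cos_pi_sub] at this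
  have hinner : ⟪u, z⟫ = ‖z‖ * Real.cos (angle z u) := by
    rw [real_inner_comm, ← cos_angle_mul_norm_mul_norm, hu]; ring
  have hpyth := o.inner_sq_add_areaForm_sq u z
  rw [hu, hinner] at hpyth
  have hcos_sq : Real.cos (angle z u) ^ 2 ≤ Real.cos γ ^ 2 := sq_le_sq' (by linarith) hcos₁
  have hsq : (‖z‖ * Real.sin γ) ^ 2 ≤ o.areaForm u z ^ 2 := by
    nlinarith [Real.sin_sq_add_cos_sq γ, mul_le_mul_of_nonneg_left hcos_sq (sq_nonneg ‖z‖)]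
  exact (le_abs_self _).trans (sq_le_sq.mp hsq)

end Angles

theorem cone_subset_cone_add {u v : Plane} {δ : ℝ} (huv : angle u v ≤ δ) (x : Plane) (γ : ℝ) :
    cone x γ u ⊆ cone x (γ + δ) v := by
  rintro y ⟨hne, h | h⟩
  · exact ⟨hne, Or.inl ((angle_le_angle_add_angle _ u v).trans_lt (by linarith))⟩
  · refine ⟨hne, Or.inr ((angle_le_angle_add_angle _ (-u) (-v)).trans_lt ?_)⟩
    rw [angle_neg_neg]; linarith

theorem dist_le_of_floor_areaForm_div_eq (o : Orientation ℝ Plane (Fin 2)) {u x y : Plane}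
    (hu : ‖u‖ = 1) {γ r : ℝ} (hγ : γ ∈ Ioo 0 Real.pi) (hr : 0 < r)
    (hcone : y ∈ cone x γ u → dist x y < r)
    (hxy : ⌊o.areaForm u x / r⌋ = ⌊o.areaForm u y / r⌋) : dist x y ≤ r / Real.sin γ := by
  rw [le_div_iff₀ (Real.sin_pos_of_pos_of_lt_pi hγ.1 hγ.2)]
  by_cases hy : y ∈ cone x γ u
  · exact (mul_le_of_le_one_right dist_nonneg (Real.sin_le_one γ)).trans (hcone hy).le
  rcases eq_or_ne y x with rfl | hne
  · simp [hr.le]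
  simp only [cone, mem_ofPred_eq, not_and, not_or, not_lt] at hy
  obtain ⟨h₁, h₂⟩ := hy hne
  have hstrip : |o.areaForm u (y - x)| < r := by
    have := Int.abs_sub_lt_one_of_floor_eq_floor hxy
    rwa [← sub_div, abs_div, abs_of_pos hr, div_lt_one hr, abs_sub_comm, ← map_sub] at this
  calc dist x y * Real.sin γ = ‖y - x‖ * Real.sin γ := by rw [dist_comm, dist_eq_norm]
    _ ≤ |o.areaForm u (y - x)| := o.norm_mul_sin_le_abs_areaForm hu hγ.1.le h₁ h₂
    _ ≤ r := hstrip.le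

theorem DiscreteAhlfors.ncard_inter_closedBall_le {d : ℕ} {E : Set (EuclideanSpace ℝ (Fin d))}
    {s C : ℝ} {N : ℕ} (hE : DiscreteAhlfors d E s C N) (hs : 0 ≤ s) {x : EuclideanSpace ℝ (Fin d)}
    (hx : x ∈ E) {ρ : ℝ} (hρN : (2 : ℝ) ^ (-(N : ℤ)) < ρ) (hρ1 : ρ ≤ 1) :
    ((E ∩ closedBall x ρ).ncard : ℝ) ≤ C * (2 * 2 ^ N * ρ) ^ s := by
  have hρ0 : 0 < ρ := (zpow_pos two_pos _).trans hρN
  rw [zpow_neg, zpow_natCast, inv_lt_comm₀ (by positivity) hρ0] at hρN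
  obtain ⟨k, hk, hk'⟩ := exists_nat_pow_near ((one_le_inv₀ hρ0).mpr hρ1) one_lt_two
  have hkN : k < N := (pow_lt_pow_iff_right₀ one_lt_two).mp (hk.trans_lt hρN)
  have hball : closedBall x ρ ⊆ closedBall x ((2 : ℝ) ^ (-(k : ℤ))) := by
    refine closedBall_subset_closedBall ?_
    rw [zpow_neg, zpow_natCast]
    exact (le_inv_comm₀ hρ0 (pow_pos two_pos k)).mpr hk
  have hcount := (hE.2 x hx k hkN).2
  have hC : 0 ≤ C := nonneg_of_mul_nonneg_left ((Nat.cast_nonneg _).trans hcount)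
    (Real.rpow_pos_of_pos two_pos _)
  have hscale : (2 : ℝ) ^ ((N : ℝ) - k) ≤ 2 * 2 ^ N * ρ := by
    rw [Real.rpow_sub two_pos, Real.rpow_natCast, Real.rpow_natCast, div_le_iff₀ (by positivity)]
    rw [inv_lt_iff_one_lt_mul₀ hρ0, pow_succ] at hk'
    nlinarith [pow_pos (two_pos (α := ℝ)) N]
  calc ((E ∩ closedBall x ρ).ncard : ℝ)
      ≤ (E ∩ closedBall x ((2 : ℝ) ^ (-(k : ℤ)))).ncard := by
        exact_mod_cast ncard_le_ncard (inter_subset_inter_right _ hball) (hE.1.inter_of_left _)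
    _ ≤ C * (2 : ℝ) ^ (((N : ℝ) - k) * s) := by rwa [← Nat.card_coe_set_eq]
    _ ≤ C * (2 * 2 ^ N * ρ) ^ s := by
        rw [Real.rpow_mul zero_le_two]
        gcongr

theorem unitSquare_subset_closedBall : unitSquare ⊆ closedBall 0 2 := by
  intro x hx
  rw [mem_closedBall_zero_iff, EuclideanSpace.norm_eq, Fin.sum_univ_two,
    Real.sqrt_le_left zero_le_two]
  obtain ⟨hx₀, hx₀'⟩ := hx 0
  obtain ⟨hx₁, hx₁'⟩ := hx 1
  simp only [Real.norm_eq_abs, sq_abs]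
  nlinarith

theorem card_Icc_floor_floor_le {a b : ℝ} (hab : a ≤ b) :
    ((Finset.Icc ⌊a⌋ ⌊b⌋).card : ℝ) ≤ b - a + 2 := by
  have hcard := Int.card_Icc_of_le ⌊a⌋ ⌊b⌋ (by linarith [Int.floor_le_floor hab])
  rw [← Int.cast_natCast, hcard]
  push_cast
  linarith [Int.floor_le b, Int.sub_one_lt_floor a]

def shortConePoints (B : Set Plane) (β r : ℝ) : Set Plane :=
  {x ∈ B | ∃ v : Plane, ‖v‖ = 1 ∧ ∀ y ∈ B, y ∈ cone x β v → dist x y < r}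

theorem ncard_le_card_mul_of_mapsTo {α β : Type*} {S : Set α} (hS : S.Finite) {f : α → β}
    {T : Finset β} (hf : ∀ x ∈ S, f x ∈ T) {M : ℝ}
    (hM : ∀ t ∈ T, ({x ∈ S | f x = t}.ncard : ℝ) ≤ M) : (S.ncard : ℝ) ≤ T.card * M := by
  classical
  rw [ncard_eq_toFinset_card _ hS, ← nsmul_eq_mul]
  calc ((hS.toFinset.card : ℕ) : ℝ) = ∑ t ∈ T, ((hS.toFinset.filter (f · = t)).card : ℝ) := by
        rw [Finset.card_eq_sum_card_fiberwise fun x hx => hf x (by simpa using hx)]; push_cast; rfl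
    _ ≤ T.card • M := Finset.sum_le_card_nsmul _ _ _ fun t ht => by
        rw [← ncard_coe_finset]; simpa using hM t ht

theorem ncard_shortConePoints_le {A B : Set Plane} (hA : A.Finite) (hBA : B ⊆ A) {R r γ M : ℝ}
    (hR : 0 ≤ R) (hAR : A ⊆ closedBall 0 R) (hr : 0 < r) (hγ : γ ∈ Ioo 0 Real.pi) (hM : 0 ≤ M)
    (hAM : ∀ x ∈ A, ((A ∩ closedBall x (r / Real.sin γ)).ncard : ℝ) ≤ M)
    {U : Finset Plane} (hU : ∀ u ∈ U, ‖u‖ = 1)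
    (hnet : ∀ v : Plane, v ≠ 0 → ∃ u ∈ U, angle v u < γ) :
    ((shortConePoints B (γ + γ) r).ncard : ℝ) ≤ M * (U.card * (2 * R / r + 2)) := by
  set o : Orientation ℝ Plane (Fin 2) := (EuclideanSpace.basisFun (Fin 2) ℝ).toBasis.orientation
  set E := shortConePoints B (γ + γ) r
  have hdir : ∀ x ∈ E, ∃ u ∈ U, ∀ y ∈ B, y ∈ cone x γ u → dist x y < r := by
    rintro x ⟨-, v, hv, hnear⟩
    obtain ⟨u, hu, hvu⟩ := hnet v (norm_ne_zero_iff.mp (by simp [hv]))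
    refine ⟨u, hu, fun y hy hyc => hnear y hy ?_⟩
    exact cone_subset_cone_add (by rw [angle_comm]; exact hvu.le) x γ hyc
  choose! dir hdirU hdir using hdir
  let label (x : Plane) : Plane × ℤ := (dir x, ⌊o.areaForm (dir x) x / r⌋)
  have hmaps : ∀ x ∈ E, label x ∈ U ×ˢ Finset.Icc ⌊-R / r⌋ ⌊R / r⌋ := by
    intro x hx
    have hω : |o.areaForm (dir x) x| ≤ R :=
      calc |o.areaForm (dir x) x| ≤ ‖dir x‖ * ‖x‖ := o.abs_areaForm_le _ _
        _ = ‖x‖ := by rw [hU _ (hdirU x hx), one_mul]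
        _ ≤ R := mem_closedBall_zero_iff.mp (hAR (hBA hx.1))
    rw [abs_le] at hω
    refine Finset.mem_product.mpr ⟨hdirU x hx, Finset.mem_Icc.mpr ⟨?_, ?_⟩⟩ <;>
      exact Int.floor_mono (div_le_div_of_nonneg_right (by linarith) hr.le)
  have hfiber (t : Plane × ℤ) : ({x ∈ E | label x = t}.ncard : ℝ) ≤ M := by
    rcases eq_empty_or_nonempty {x ∈ E | label x = t} with hempty | ⟨x, hxE, hxt⟩
    · simp [hempty, hM]
    refine le_trans ?_ (hAM x (hBA hxE.1))
    have hsub : {y ∈ E | label y = t} ⊆ A ∩ closedBall x (r / Real.sin γ) := by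
      rintro y ⟨hyE, hyt⟩
      obtain ⟨hdir_eq, hfloor⟩ := Prod.mk.inj (hxt.trans hyt.symm)
      refine ⟨hBA hyE.1, mem_closedBall'.mpr (dist_le_of_floor_areaForm_div_eq o
        (hU _ (hdirU x hxE)) hγ hr (hdir x hxE y hyE.1) ?_)⟩
      rw [hfloor, hdir_eq]
    exact_mod_cast ncard_le_ncard hsub (hA.inter_of_left _)
  have hIcc := card_Icc_floor_floor_le (a := -R / r) (b := R / r) (by
    rw [neg_div]; linarith [div_nonneg hR hr.le])
  calc (E.ncard : ℝ) ≤ (U ×ˢ Finset.Icc ⌊-R / r⌋ ⌊R / r⌋).card * M :=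
        ncard_le_card_mul_of_mapsTo (hA.subset fun x hx => hBA hx.1) hmaps fun t _ => hfiber t
    _ ≤ M * (U.card * (2 * R / r + 2)) := by
        rw [Finset.card_product, mul_comm, Nat.cast_mul]
        gcongr
        linarith [show R / r - -R / r = 2 * R / r by ring]

theorem ncard_shortConePoints_le_of_discreteAhlfors {A B : Set Plane} {s C r γ : ℝ} {N : ℕ}
    (hA : DiscreteAhlfors 2 A s C N) (hAsq : A ⊆ unitSquare) (hBA : B ⊆ A) (hs : 0 ≤ s)
    (hC : 0 ≤ C) (hγ : γ ∈ Ioo 0 Real.pi) (hrN : (2 : ℝ) ^ (-(N : ℤ)) < r)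
    (hr : r ≤ Real.sin γ) {U : Finset Plane} (hU : ∀ u ∈ U, ‖u‖ = 1)
    (hnet : ∀ v : Plane, v ≠ 0 → ∃ u ∈ U, angle v u < γ) :
    ((shortConePoints B (γ + γ) r).ncard : ℝ) ≤
      6 * U.card * C * 2 ^ s / Real.sin γ ^ s * (2 ^ N) ^ s * r ^ (s - 1) := by
  have hsin : 0 < Real.sin γ := Real.sin_pos_of_pos_of_lt_pi hγ.1 hγ.2
  have hr0 : 0 < r := (zpow_pos two_pos _).trans hrN
  have hr1 : r ≤ 1 := hr.trans (Real.sin_le_one γ)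
  have hρN : (2 : ℝ) ^ (-(N : ℤ)) < r / Real.sin γ :=
    hrN.trans_le (le_div_self hr0.le hsin (Real.sin_le_one γ))
  have hρ1 : r / Real.sin γ ≤ 1 := (div_le_one hsin).mpr hr
  calc ((shortConePoints B (γ + γ) r).ncard : ℝ)
      ≤ C * (2 * 2 ^ N * (r / Real.sin γ)) ^ s * (U.card * (2 * 2 / r + 2)) :=
        ncard_shortConePoints_le hA.1 hBA zero_le_two (hAsq.trans unitSquare_subset_closedBall)
          hr0 hγ (by positivity) (fun x hx => hA.ncard_inter_closedBall_le hs hx hρN hρ1) hU hnet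
    _ ≤ C * (2 * 2 ^ N * (r / Real.sin γ)) ^ s * (U.card * (6 / r)) := by
        gcongr
        have h2r : 2 ≤ 2 / r := (le_div_iff₀ hr0).mpr (by linarith)
        linarith [show 6 / r = 2 * 2 / r + 2 / r by ring]
    _ = 6 * U.card * C * 2 ^ s / Real.sin γ ^ s * (2 ^ N) ^ s * r ^ (s - 1) := by
        rw [Real.mul_rpow (x := 2 * 2 ^ N) (by positivity) (by positivity),
          Real.mul_rpow zero_le_two (by positivity),
          Real.div_rpow hr0.le hsin.le, Real.rpow_sub_one hr0.ne']
        field_simp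

theorem eventually_le_two_rpow_mul {a : ℝ} (ha : 0 < a) (D : ℝ) :
    ∀ᶠ N : ℕ in atTop, D ≤ (2 : ℝ) ^ (a * N) := by
  filter_upwards [(tendsto_pow_atTop_atTop_of_one_lt
    (Real.one_lt_rpow one_lt_two ha)).eventually_ge_atTop D] with N hN
  rwa [Real.rpow_mul zero_le_two, Real.rpow_natCast]

theorem eventually_ncard_shortConePoints_le {s C κ γ : ℝ} (hs : 1 < s) (hC : 0 ≤ C)
    (hκ : κ ∈ Ioo 0 ((s - 1) / (2 * s))) (hγ : γ ∈ Ioo 0 Real.pi) {U : Finset Plane}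
    (hU : ∀ u ∈ U, ‖u‖ = 1) (hnet : ∀ v : Plane, v ≠ 0 → ∃ u ∈ U, angle v u < γ) :
    ∀ᶠ N : ℕ in atTop, ∀ A B : Set Plane, A ⊆ unitSquare → DiscreteAhlfors 2 A s C N → B ⊆ A →
      ((shortConePoints B (γ + γ) (2 ^ (-(2 * s / (s - 1)) * κ * N))).ncard : ℝ) ≤
        2 ^ ((1 - κ) * s * N) := by
  have hsin : 0 < Real.sin γ := Real.sin_pos_of_pos_of_lt_pi hγ.1 hγ.2
  set τ := 2 * s / (s - 1) * κ
  have hτ : τ * (s - 1) = 2 * s * κ := by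
    have : s - 1 ≠ 0 := by linarith
    simp only [τ]; field_simp
  have hτ0 : 0 < τ := mul_pos (div_pos (by linarith) (by linarith)) hκ.1
  have hτ1 : τ < 1 := by
    have := hκ.2
    rw [lt_div_iff₀ (by positivity)] at this
    nlinarith
  set D := 6 * U.card * C * 2 ^ s / Real.sin γ ^ s
  filter_upwards [eventually_gt_atTop 0, eventually_le_two_rpow_mul hτ0 (Real.sin γ)⁻¹,
    eventually_le_two_rpow_mul (a := κ * s) (mul_pos hκ.1 (by linarith)) D]
    with N hN hNγ hND A B hAsq hA hBA
  have hr : (2 : ℝ) ^ (-(2 * s / (s - 1)) * κ * N) = 2 ^ (-(τ * N)) := by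
    simp only [τ]; ring_nf
  have hrN : (2 : ℝ) ^ (-(N : ℤ)) < 2 ^ (-(τ * N)) := by
    rw [zpow_neg, zpow_natCast, ← Real.rpow_natCast, ← Real.rpow_neg zero_le_two]
    have : (0 : ℝ) < N := Nat.cast_pos.mpr hN
    exact Real.rpow_lt_rpow_of_exponent_lt one_lt_two (by nlinarith)
  have hrγ : (2 : ℝ) ^ (-(τ * N)) ≤ Real.sin γ := by
    rw [Real.rpow_neg zero_le_two]
    exact (inv_le_comm₀ hsin (by positivity)).mp hNγ
  have hscale : ((2 : ℝ) ^ N) ^ s * (2 ^ (-(τ * N))) ^ (s - 1) = 2 ^ ((1 - 2 * κ) * s * N) := by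
    rw [← Real.rpow_natCast, ← Real.rpow_mul zero_le_two, ← Real.rpow_mul zero_le_two,
      ← Real.rpow_add two_pos]
    congr 1
    linear_combination (-(N : ℝ)) * hτ
  rw [hr]
  calc ((shortConePoints B (γ + γ) (2 ^ (-(τ * N)))).ncard : ℝ)
      ≤ D * (((2 : ℝ) ^ N) ^ s * (2 ^ (-(τ * N))) ^ (s - 1)) := by
        rw [← mul_assoc]
        exact ncard_shortConePoints_le_of_discreteAhlfors hA hAsq hBA (by linarith) hC hγ hrN hrγ
          hU hnet
    _ ≤ 2 ^ (κ * s * N) * 2 ^ ((1 - 2 * κ) * s * N) := by rw [hscale]; gcongr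
    _ = 2 ^ ((1 - κ) * s * N) := by rw [← Real.rpow_add two_pos]; ring_nf

/-- **Lemma 4.2.** Conical density for large subsets of discrete Ahlfors-regular sets. -/
theorem dense_radial_projections_discrete_AR :
    ∀ s C κ β : ℝ, s ∈ Set.Ioo (1 : ℝ) 2 → 1 < C → κ ∈ Set.Ioo 0 ((s - 1) / (2 * s)) →
    β ∈ Set.Ioo 0 (Real.pi / 2) →
    ∃ N₀ : ℕ, ∀ N : ℕ, N₀ ≤ N →
    ∀ A : Set Plane, A ⊆ unitSquare → DiscreteAhlfors 2 A s C N →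
    ∀ B : Set Plane, B ⊆ A → (2 : ℝ) ^ ((1 - κ) * s * N) < (Nat.card ↥B : ℝ) →
    ∃ E : Set Plane, E ⊆ B ∧ (Nat.card ↥E : ℝ) ≤ (2 : ℝ) ^ ((1 - κ) * s * N) ∧
      ∀ x ∈ B \ E, ∀ v : Plane, ‖v‖ = 1 →
        ∃ y ∈ B, y ∈ cone x β v ∧ (2 : ℝ) ^ (-(2 * s / (s - 1)) * κ * N) ≤ dist x y := by
  rintro s C κ β ⟨hs, -⟩ hC hκ ⟨hβ, hβπ⟩
  have hγ : β / 2 ∈ Ioo 0 Real.pi := ⟨by positivity, by linarith [Real.pi_pos]⟩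
  obtain ⟨U, hU, hnet⟩ := exists_finset_forall_angle_lt (V := Plane) hγ.1
  obtain ⟨N₀, hN₀⟩ := eventually_atTop.mp
    (eventually_ncard_shortConePoints_le (C := C) hs (by linarith) hκ hγ hU hnet)
  refine ⟨N₀, fun N hN A hAsq hA B hBA _ =>
    ⟨shortConePoints B β (2 ^ (-(2 * s / (s - 1)) * κ * N)), sep_subset _ _, ?_, ?_⟩⟩
  · have hcard := hN₀ N hN A B hAsq hA hBA
    rwa [add_halves, ← Nat.card_coe_set_eq] at hcard
  · rintro x ⟨hxB, hxE⟩ v hv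
    by_contra! hnear
    exact hxE ⟨hxB, v, hv, hnear⟩
end

section
/- There is a constant C(d) depending only on the dimension d such that for all integers 0 < q < N and every probability measure μ on [0,1)^d: | H_N(μ) − (1/N) ∑_{n=0}^{N−1} ∑_{Q ∈ 𝒟_n, μ(Q)>0} μ(Q) H_q(μ^Q) | ≤ C(d) · q/N. -/
open MeasureTheory Metric Set Filter
open scoped ENNReal NNReal Topology

/-! Write `e k = H(μ, 𝒟_k)`. The grouping property of entropy gives the chain rule
`e (n + q) = e n + ∑_{Q ∈ 𝒟_n} μ(Q) H(μ^Q, 𝒟_q)`, so the scenery average of `H_q` is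
`(1/(Nq)) ∑_{n<N} (e (n+q) - e n)`, which telescopes to `(1/(Nq)) ∑_{j<q} (e (N+j) - e j)`.
A probability measure on `[0,1)^d` has `0 ≤ H(ν, 𝒟_q) ≤ qd`, so by the chain rule `e` is
nondecreasing with `e (n+j) ≤ e n + jd`; hence each of the `q` terms is within `qd` of `e N`,
which is the bound `d q / N`. -/

noncomputable def negMulLogb (x : ℝ) : ℝ := -(x * Real.logb 2 x)

lemma negMulLogb_eq (x : ℝ) : negMulLogb x = Real.negMulLog x / Real.log 2 := by
  simp only [negMulLogb, Real.negMulLog, Real.logb]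
  ring

@[simp] lemma negMulLogb_zero : negMulLogb 0 = 0 := by simp [negMulLogb]

lemma negMulLogb_nonneg {x : ℝ} (h0 : 0 ≤ x) (h1 : x ≤ 1) : 0 ≤ negMulLogb x := by
  rw [negMulLogb_eq]
  exact div_nonneg (Real.negMulLog_nonneg h0 h1) (Real.log_nonneg one_le_two)

lemma negMulLogb_mul (x y : ℝ) : negMulLogb (x * y) = y * negMulLogb x + x * negMulLogb y := by
  simp only [negMulLogb_eq, Real.negMulLog_mul]
  ring

lemma sum_negMulLogb_le_logb_card {ι : Type*} {s : Finset ι} {p : ι → ℝ}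
    (hp : ∀ i ∈ s, 0 ≤ p i) (hsum : ∑ i ∈ s, p i = 1) :
    ∑ i ∈ s, negMulLogb (p i) ≤ Real.logb 2 s.card := by
  have hcard : (0 : ℝ) < s.card := by
    have : s.Nonempty := Finset.nonempty_of_sum_ne_zero (by rw [hsum]; exact one_ne_zero)
    exact_mod_cast this.card_pos
  have hjensen := Real.concaveOn_negMulLog.le_map_sum (t := s) (w := fun _ => (s.card : ℝ)⁻¹)
    (p := p) (fun _ _ => by positivity) (by simp [hcard.ne']) hp
  simp only [smul_eq_mul, ← Finset.mul_sum, hsum, mul_one] at hjensen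
  rw [Real.negMulLog, Real.log_inv, neg_mul_neg, mul_le_mul_iff_right₀ (inv_pos.2 hcard)]
    at hjensen
  simp only [negMulLogb_eq, ← Finset.sum_div, Real.logb]
  exact div_le_div_of_nonneg_right hjensen (Real.log_nonneg one_le_two)

lemma Finset.sum_range_sub_shift {G : Type*} [AddCommGroup G] (f : ℕ → G) (N q : ℕ) :
    ∑ n ∈ Finset.range N, (f (n + q) - f n) = ∑ j ∈ Finset.range q, (f (N + j) - f j) := by
  have h₁ := Finset.sum_range_add f q N
  have h₂ := Finset.sum_range_add f N q
  simp only [Finset.sum_sub_distrib, sub_eq_sub_iff_add_eq_add, add_comm _ q]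
  rw [add_comm q N] at h₁
  rw [add_comm, ← h₁, h₂, add_comm]

lemma abs_div_sub_mean_increment_le {e : ℕ → ℝ} {c : ℝ} (h0 : e 0 = 0)
    (hmono : ∀ n j, e n ≤ e (n + j)) (hlip : ∀ n j, e (n + j) ≤ e n + j * c)
    {q N : ℕ} (hq : 0 < q) (hN : 0 < N) :
    |e N / N - 1 / N * ∑ n ∈ Finset.range N, (e (n + q) - e n) / q| ≤ c * q / N := by
  have hc : 0 ≤ c := by simpa [h0] using (hmono 0 1).trans (hlip 0 1)
  have hterm : ∀ j ∈ Finset.range q, |e (N + j) - e j - e N| ≤ q * c := by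
    intro j hj
    have hjq : (j : ℝ) * c ≤ q * c :=
      mul_le_mul_of_nonneg_right (by exact_mod_cast (Finset.mem_range.1 hj).le) hc
    have h₁ := hmono N j
    have h₂ := hlip N j
    have h₃ := hmono 0 j
    have h₄ := hlip 0 j
    simp only [zero_add, h0] at h₃ h₄
    rw [abs_le]
    constructor <;> linarith
  have hsum : |q * e N - ∑ n ∈ Finset.range N, (e (n + q) - e n)| ≤ q * (q * c) := by
    rw [Finset.sum_range_sub_shift, abs_sub_comm]
    calc |∑ j ∈ Finset.range q, (e (N + j) - e j) - q * e N|
        = |∑ j ∈ Finset.range q, (e (N + j) - e j - e N)| := by simp [Finset.sum_sub_distrib]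
      _ ≤ ∑ j ∈ Finset.range q, (q * c : ℝ) :=
        (Finset.abs_sum_le_sum_abs _ _).trans (Finset.sum_le_sum hterm)
      _ = q * (q * c) := by simp
  have hN' : (0 : ℝ) < N := by exact_mod_cast hN
  have hq' : (0 : ℝ) < q := by exact_mod_cast hq
  rw [← Finset.sum_div, show ∀ a b : ℝ, a / N - 1 / N * (b / q) = (q * a - b) / (N * q) by
    intro a b; field_simp, abs_div, abs_of_pos (mul_pos hN' hq')]
  calc _ ≤ q * (q * c) / (N * q) := by gcongr
    _ = c * q / N := by field_simp

noncomputable def cubeIndices (d k : ℕ) : Finset (Fin d → ℤ) :=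
  Fintype.piFinset fun _ => Finset.Ico 0 (2 ^ k)

section Dyadic

variable {d : ℕ}

lemma mem_cubeIndices {k : ℕ} {m : Fin d → ℤ} :
    m ∈ cubeIndices d k ↔ ∀ i, 0 ≤ m i ∧ m i < 2 ^ k := by
  simp [cubeIndices]

lemma card_cubeIndices (k : ℕ) : (cubeIndices d k).card = 2 ^ (k * d) := by
  have h : ((2 : ℤ) ^ k).toNat = 2 ^ k := by exact_mod_cast Int.toNat_natCast (2 ^ k)
  simp [cubeIndices, pow_mul, h]

lemma mem_dcube_iff {k : ℕ} {m : Fin d → ℤ} {x : EuclideanSpace ℝ (Fin d)} :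
    x ∈ dcube d k m ↔ ∀ i, ⌊x i * 2 ^ k⌋ = m i := by
  have h : (0 : ℝ) < 2 ^ k := by positivity
  simp only [dcube, Set.mem_ofPred_eq, zpow_neg, zpow_natCast, Int.floor_eq_iff,
    mul_inv_le_iff₀ h, lt_mul_inv_iff₀ h]

lemma pairwise_disjoint_dcube (k : ℕ) : Pairwise (Function.onFun Disjoint (dcube d k)) := by
  intro a b hab
  refine Set.disjoint_left.2 fun x ha hb => hab (funext fun i => ?_)
  rw [← mem_dcube_iff.1 ha i, mem_dcube_iff.1 hb i]

lemma measurableSet_dcube {k : ℕ} {m : Fin d → ℤ} : MeasurableSet (dcube d k m) := by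
  simp only [dcube, Set.ofPred_forall]
  exact MeasurableSet.iInter fun i => by measurability

lemma unitCubeHO_eq_dcube_zero : unitCubeHO d = dcube d 0 0 := by
  ext x
  simp [unitCubeHO, dcube]

lemma measurableSet_unitCubeHO : MeasurableSet (unitCubeHO d) :=
  unitCubeHO_eq_dcube_zero ▸ measurableSet_dcube

lemma mem_unitCubeHO_iff_mem_cubeIndices {k : ℕ} {m : Fin d → ℤ}
    {x : EuclideanSpace ℝ (Fin d)} (hx : x ∈ dcube d k m) :
    x ∈ unitCubeHO d ↔ m ∈ cubeIndices d k := by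
  have h : (0 : ℝ) < 2 ^ k := by positivity
  rw [mem_dcube_iff] at hx
  simp only [unitCubeHO, Set.mem_ofPred_eq, mem_cubeIndices, ← hx, Int.floor_nonneg,
    Int.floor_lt]
  push_cast
  exact forall_congr' fun i =>
    and_congr (mul_nonneg_iff_of_pos_right h).symm (mul_lt_iff_lt_one_left h).symm

lemma dcube_subset_unitCubeHO {k : ℕ} {m : Fin d → ℤ} (hm : m ∈ cubeIndices d k) :
    dcube d k m ⊆ unitCubeHO d :=
  fun _ hx => (mem_unitCubeHO_iff_mem_cubeIndices hx).2 hm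

lemma unitCubeHO_eq_biUnion (k : ℕ) : unitCubeHO d = ⋃ m ∈ cubeIndices d k, dcube d k m := by
  ext x
  simp only [Set.mem_iUnion, exists_prop]
  constructor
  · intro hx
    have hmem : x ∈ dcube d k fun i => ⌊x i * 2 ^ k⌋ := mem_dcube_iff.2 fun _ => rfl
    exact ⟨_, (mem_unitCubeHO_iff_mem_cubeIndices hmem).1 hx, hmem⟩
  · rintro ⟨m, hm, hx⟩
    exact dcube_subset_unitCubeHO hm hx

lemma cubeMap_apply (n : ℕ) (m : Fin d → ℤ) (x : EuclideanSpace ℝ (Fin d)) (i : Fin d) :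
    cubeMap d n m x i = 2 ^ n * x i - m i := rfl

lemma measurable_cubeMap (n : ℕ) (m : Fin d → ℤ) : Measurable (cubeMap d n m) := by
  unfold cubeMap
  fun_prop

lemma preimage_cubeMap_dcube (n q : ℕ) (m m' : Fin d → ℤ) :
    cubeMap d n m ⁻¹' dcube d q m' = dcube d (n + q) ((2 ^ q : ℤ) • m + m') := by
  ext x
  simp only [Set.mem_preimage, mem_dcube_iff, cubeMap_apply, Pi.add_apply, Pi.smul_apply,
    smul_eq_mul]
  refine forall_congr' fun i => ?_
  rw [show (2 ^ n * x i - m i) * 2 ^ q = x i * 2 ^ (n + q) - ((2 ^ q * m i : ℤ) : ℝ) by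
    push_cast; ring, Int.floor_sub_intCast]
  omega

lemma preimage_cubeMap_unitCubeHO (n : ℕ) (m : Fin d → ℤ) :
    cubeMap d n m ⁻¹' unitCubeHO d = dcube d n m := by
  rw [unitCubeHO_eq_dcube_zero, preimage_cubeMap_dcube]
  simp

lemma sum_cubeIndices_add {M : Type*} [AddCommMonoid M] (n q : ℕ) (f : (Fin d → ℤ) → M) :
    ∑ m ∈ cubeIndices d n, ∑ m' ∈ cubeIndices d q, f ((2 ^ q : ℤ) • m + m')
      = ∑ l ∈ cubeIndices d (n + q), f l := by
  have h2q : (0 : ℤ) < 2 ^ q := by positivity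
  rw [← Finset.sum_product']
  refine Finset.sum_nbij' (fun p => (2 ^ q : ℤ) • p.1 + p.2)
    (fun l => (fun i => l i / 2 ^ q, fun i => l i % 2 ^ q)) ?_ ?_ ?_ ?_ fun _ _ => rfl
  · rintro ⟨m, m'⟩ hp
    simp only [Finset.mem_product, mem_cubeIndices] at hp ⊢
    intro i
    simp only [Pi.add_apply, Pi.smul_apply, smul_eq_mul, pow_add]
    constructor <;> nlinarith [hp.1 i, hp.2 i]
  · intro l hl
    simp only [Finset.mem_product, mem_cubeIndices] at hl ⊢
    refine ⟨fun i => ⟨Int.ediv_nonneg (hl i).1 h2q.le, ?_⟩,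
      fun i => ⟨Int.emod_nonneg _ h2q.ne', Int.emod_lt_of_pos _ h2q⟩⟩
    rw [Int.ediv_lt_iff_lt_mul h2q, ← pow_add]
    exact (hl i).2
  · rintro ⟨m, m'⟩ hp
    simp only [Finset.mem_product, mem_cubeIndices] at hp
    ext i <;> simp only [Pi.add_apply, Pi.smul_apply, smul_eq_mul]
    · rw [Int.mul_add_ediv_left _ _ h2q.ne', Int.ediv_eq_zero_of_lt (hp.2 i).1 (hp.2 i).2,
        add_zero]
    · rw [Int.mul_add_emod_self_left, Int.emod_eq_of_lt (hp.2 i).1 (hp.2 i).2]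
  · intro l _
    ext i
    simp [Int.mul_ediv_add_emod]

end Dyadic

section Entropy

variable {d : ℕ} {ν : Measure (EuclideanSpace ℝ (Fin d))}

lemma measure_unitCubeHO_eq_sum (ν : Measure (EuclideanSpace ℝ (Fin d))) (k : ℕ) :
    ν (unitCubeHO d) = ∑ m ∈ cubeIndices d k, ν (dcube d k m) := by
  rw [unitCubeHO_eq_biUnion k, measure_biUnion_finset
    (fun _ _ _ _ hab => pairwise_disjoint_dcube k hab) fun _ _ => measurableSet_dcube]

lemma measure_dcube_eq_zero (hν : ν (unitCubeHO d)ᶜ = 0) {k : ℕ} {m : Fin d → ℤ}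
    (hm : m ∉ cubeIndices d k) : ν (dcube d k m) = 0 :=
  measure_mono_null (fun _ hx hxu => hm ((mem_unitCubeHO_iff_mem_cubeIndices hx).1 hxu)) hν

lemma tsum_toReal_measure_dcube_mul (hν : ν (unitCubeHO d)ᶜ = 0) (k : ℕ)
    (f : (Fin d → ℤ) → ℝ) :
    ∑' m, (ν (dcube d k m)).toReal * f m
      = ∑ m ∈ cubeIndices d k, (ν (dcube d k m)).toReal * f m :=
  tsum_eq_sum fun _ hm => by simp [measure_dcube_eq_zero hν hm]

lemma entropy_eq_sum (hν : ν (unitCubeHO d)ᶜ = 0) (k : ℕ) :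
    entropy d ν k = ∑ m ∈ cubeIndices d k, negMulLogb (ν (dcube d k m)).toReal :=
  tsum_eq_sum fun _ hm => by simp [measure_dcube_eq_zero hν hm]

lemma sum_toReal_measure_dcube [IsProbabilityMeasure ν] (hν : ν (unitCubeHO d)ᶜ = 0)
    (k : ℕ) : ∑ m ∈ cubeIndices d k, (ν (dcube d k m)).toReal = 1 := by
  rw [← ENNReal.toReal_sum fun _ _ => measure_ne_top ν _, ← measure_unitCubeHO_eq_sum,
    (prob_compl_eq_zero_iff measurableSet_unitCubeHO).1 hν, ENNReal.toReal_one]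

lemma entropy_nonneg [IsProbabilityMeasure ν] (k : ℕ) : 0 ≤ entropy d ν k :=
  tsum_nonneg fun _ => negMulLogb_nonneg ENNReal.toReal_nonneg measureReal_le_one

lemma entropy_le [IsProbabilityMeasure ν] (hν : ν (unitCubeHO d)ᶜ = 0) (k : ℕ) :
    entropy d ν k ≤ k * d := by
  rw [entropy_eq_sum hν]
  refine (sum_negMulLogb_le_logb_card (fun _ _ => ENNReal.toReal_nonneg)
    (sum_toReal_measure_dcube hν k)).trans_eq ?_
  rw [card_cubeIndices, Nat.cast_pow, Nat.cast_ofNat, Real.logb_pow,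
    Real.logb_self_eq_one one_lt_two]
  push_cast
  ring

end Entropy

section CubeMeasure

variable {d : ℕ} {μ : Measure (EuclideanSpace ℝ (Fin d))} {n : ℕ} {m : Fin d → ℤ}

lemma cubeMeasure_apply {s : Set (EuclideanSpace ℝ (Fin d))} (hs : MeasurableSet s) :
    cubeMeasure d n m μ s = (μ (dcube d n m))⁻¹ * μ (cubeMap d n m ⁻¹' (s ∩ unitCubeHO d)) := by
  rw [cubeMeasure, Measure.map_apply (measurable_cubeMap n m) hs, Measure.smul_apply,
    Measure.restrict_apply (measurable_cubeMap n m hs), smul_eq_mul, Set.preimage_inter,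
    preimage_cubeMap_unitCubeHO]

lemma cubeMeasure_compl_unitCubeHO : cubeMeasure d n m μ (unitCubeHO d)ᶜ = 0 := by
  simp [cubeMeasure_apply measurableSet_unitCubeHO.compl]

lemma isProbabilityMeasure_cubeMeasure [IsFiniteMeasure μ] (h : μ (dcube d n m) ≠ 0) :
    IsProbabilityMeasure (cubeMeasure d n m μ) :=
  ⟨by rw [cubeMeasure_apply MeasurableSet.univ, Set.univ_inter, preimage_cubeMap_unitCubeHO,
    ENNReal.inv_mul_cancel h (measure_ne_top μ _)]⟩

lemma cubeMeasure_dcube {q : ℕ} {m' : Fin d → ℤ} (hm' : m' ∈ cubeIndices d q) :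
    cubeMeasure d n m μ (dcube d q m')
      = (μ (dcube d n m))⁻¹ * μ (dcube d (n + q) ((2 ^ q : ℤ) • m + m')) := by
  rw [cubeMeasure_apply measurableSet_dcube, Set.inter_eq_left.2 (dcube_subset_unitCubeHO hm'),
    preimage_cubeMap_dcube]

lemma dcube_add_subset {q : ℕ} {m' : Fin d → ℤ} (hm' : m' ∈ cubeIndices d q) :
    dcube d (n + q) ((2 ^ q : ℤ) • m + m') ⊆ dcube d n m := by
  rw [← preimage_cubeMap_dcube, ← preimage_cubeMap_unitCubeHO n m]
  exact Set.preimage_mono (dcube_subset_unitCubeHO hm')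

lemma sum_negMulLogb_subcubes [IsFiniteMeasure μ] (q : ℕ) :
    ∑ m' ∈ cubeIndices d q, negMulLogb (μ (dcube d (n + q) ((2 ^ q : ℤ) • m + m'))).toReal
      = negMulLogb (μ (dcube d n m)).toReal
        + (μ (dcube d n m)).toReal * entropy d (cubeMeasure d n m μ) q := by
  rcases eq_or_ne (μ (dcube d n m)) 0 with h0 | h0
  · refine (Finset.sum_eq_zero fun m' hm' => ?_).trans (by simp [h0])
    rw [measure_mono_null (dcube_add_subset hm') h0]
    simp
  have := isProbabilityMeasure_cubeMeasure h0
  have hsub : ∀ m' ∈ cubeIndices d q, (μ (dcube d (n + q) ((2 ^ q : ℤ) • m + m'))).toReal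
      = (μ (dcube d n m)).toReal * (cubeMeasure d n m μ (dcube d q m')).toReal := by
    intro m' hm'
    rw [cubeMeasure_dcube hm', ENNReal.toReal_mul, ENNReal.toReal_inv,
      mul_inv_cancel_left₀ (ENNReal.toReal_ne_zero.2 ⟨h0, measure_ne_top μ _⟩)]
  rw [Finset.sum_congr rfl fun m' hm' => by rw [hsub m' hm', negMulLogb_mul],
    Finset.sum_add_distrib, ← Finset.sum_mul, sum_toReal_measure_dcube cubeMeasure_compl_unitCubeHO,
    one_mul, ← Finset.mul_sum, ← entropy_eq_sum cubeMeasure_compl_unitCubeHO]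

end CubeMeasure

section ChainRule

variable {d : ℕ} {μ : Measure (EuclideanSpace ℝ (Fin d))}

theorem entropy_add_eq [IsFiniteMeasure μ] (hμ : μ (unitCubeHO d)ᶜ = 0) (n q : ℕ) :
    entropy d μ (n + q) = entropy d μ n
      + ∑' m, (μ (dcube d n m)).toReal * entropy d (cubeMeasure d n m μ) q := by
  rw [entropy_eq_sum hμ, entropy_eq_sum hμ, ← sum_cubeIndices_add,
    Finset.sum_congr rfl fun m _ => sum_negMulLogb_subcubes q, Finset.sum_add_distrib,
    tsum_toReal_measure_dcube_mul hμ]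

variable [IsProbabilityMeasure μ] (hμ : μ (unitCubeHO d)ᶜ = 0)
include hμ

lemma entropy_zero : entropy d μ 0 = 0 :=
  le_antisymm (by simpa using entropy_le hμ 0) (entropy_nonneg 0)

lemma entropy_le_entropy_add (n q : ℕ) : entropy d μ n ≤ entropy d μ (n + q) := by
  rw [entropy_add_eq hμ]
  refine le_add_of_nonneg_right (tsum_nonneg fun m => ?_)
  rcases eq_or_ne (μ (dcube d n m)) 0 with h0 | h0
  · simp [h0]
  · have := isProbabilityMeasure_cubeMeasure h0
    exact mul_nonneg ENNReal.toReal_nonneg (entropy_nonneg q)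

lemma entropy_add_le (n q : ℕ) : entropy d μ (n + q) ≤ entropy d μ n + q * d := by
  rw [entropy_add_eq hμ, tsum_toReal_measure_dcube_mul hμ]
  gcongr
  calc ∑ m ∈ cubeIndices d n, (μ (dcube d n m)).toReal * entropy d (cubeMeasure d n m μ) q
      ≤ ∑ m ∈ cubeIndices d n, (μ (dcube d n m)).toReal * (q * d) := by
        refine Finset.sum_le_sum fun m _ => ?_
        rcases eq_or_ne (μ (dcube d n m)) 0 with h0 | h0
        · simp [h0]
        · have := isProbabilityMeasure_cubeMeasure h0
          exact mul_le_mul_of_nonneg_left (entropy_le cubeMeasure_compl_unitCubeHO q)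
            ENNReal.toReal_nonneg
    _ = q * d := by rw [← Finset.sum_mul, sum_toReal_measure_dcube hμ, one_mul]

end ChainRule

/-- **Lemma 2.1.** (Global entropy from local entropies.) There is `C(d)` such that for all
`0 < q < N` and every probability measure `μ` on `[0,1)^d`,
`|H_N(μ) - ∫ H_q dη d⟨μ⟩_{[0,N)}| ≤ C(d)·q/N`. -/
theorem local_entropy_from_global_entropy (d : ℕ) :
    ∃ K : ℝ, 0 < K ∧ ∀ q N : ℕ, 0 < q → q < N →
    ∀ μ : MeasureTheory.Measure (EuclideanSpace ℝ (Fin d)),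
      MeasureTheory.IsProbabilityMeasure μ → μ (unitCubeHO d) = 1 →
      |nentropy d μ N - sceneryAvg d μ N (fun η => nentropy d η q)| ≤ K * q / N := by
  refine ⟨d + 1, by positivity, fun q N hq hqN μ _ hμ₁ => ?_⟩
  have hμ : μ (unitCubeHO d)ᶜ = 0 := (prob_compl_eq_zero_iff measurableSet_unitCubeHO).2 hμ₁
  have hscenery : sceneryAvg d μ N (fun η => nentropy d η q)
      = 1 / N * ∑ n ∈ Finset.range N, (entropy d μ (n + q) - entropy d μ n) / q := by
    simp only [sceneryAvg, nentropy, mul_div_assoc', tsum_div_const, entropy_add_eq hμ,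
      add_sub_cancel_left]
  calc |nentropy d μ N - sceneryAvg d μ N (fun η => nentropy d η q)|
      ≤ d * q / N := hscenery ▸ abs_div_sub_mean_increment_le (entropy_zero hμ)
        (entropy_le_entropy_add hμ) (entropy_add_le hμ) hq (hq.trans hqN)
    _ ≤ (d + 1) * q / N := by gcongr; linarith
end
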